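/- arXiv:0809.1179 — 5 statements merged into one kernel-verified Lean document; each statement's English description precedes it below -/
import Mathlib

section
/- For every k ≥ 3 and every n ≥ 1, in the Tower of Hanoi graph H_n^k every vertex that is not a perfect state (i.e., is not a constant function) has degree at least 2k − 3; in particular, its degree is strictly greater than k − 1. -/
/-- The Tower of Hanoi graph `H_n^k`: vertices are functions `Fin n → Fin k`
(disk `i` lies on peg `v i`; smaller indices are smaller disks); two states are
adjacent iff they differ by one legal move of a single disk `d`: the position of
`d` changes, all other disks stay, and no smaller disk lies on the source peg or
the target peg of `d`. -/
def hanoiGraph (n k : ℕ) : SimpleGraph (Fin n → Fin k) where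
  Adj v w := ∃ d : Fin n, v d ≠ w d ∧ (∀ i : Fin n, i ≠ d → v i = w i) ∧
    (∀ i : Fin n, i < d → v i ≠ v d ∧ v i ≠ w d)
  symm := by
    constructor
    rintro v w ⟨d, h1, h2, h3⟩
    refine ⟨d, h1.symm, fun i hi => (h2 i hi).symm, fun i hi => ?_⟩
    have he : v i = w i := h2 i (ne_of_lt hi)
    have h := h3 i hi
    exact ⟨he ▸ h.2, he ▸ h.1⟩
  loopless := by constructor; rintro v ⟨d, h1, -⟩; exact h1 rfl

attribute [local instance] Classical.propDecidable

/-!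
The smallest disk can always move to any of the other `k - 1` pegs. Let `d` be the smallest
disk not on the peg `p` of the smallest disk: every disk below `d` lies on `p`, so `d` can move
to any of the `k - 2` pegs other than `p` and its own. These moves change `d` while the former
ones do not, so they give `2k - 3` distinct neighbours.
-/

open Function Finset

theorem exists_forall_lt_eq_of_exists_ne {α β : Type*} [LinearOrder α] [WellFoundedLT α]
    {v : α → β} {p : β} (h : ∃ i, v i ≠ p) : ∃ d, v d ≠ p ∧ ∀ i < d, v i = p := by
  obtain ⟨d, hd, hmin⟩ := WellFounded.has_min wellFounded_lt {i | v i ≠ p} h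
  exact ⟨d, hd, fun i hi => not_not.1 fun hne => hmin i hne hi⟩

namespace hanoiGraph

variable {n k : ℕ}

theorem adj_update {v : Fin n → Fin k} {d : Fin n} {c : Fin k} (hc : v d ≠ c)
    (hlt : ∀ i < d, v i ≠ v d ∧ v i ≠ c) : (hanoiGraph n k).Adj v (update v d c) :=
  ⟨d, by simpa using hc, fun i hi => (update_of_ne hi c v).symm, by simpa using hlt⟩

theorem image_update_subset_neighborFinset {v : Fin n → Fin k} {d : Fin n} {S : Finset (Fin k)}
    (hS : ∀ c ∈ S, v d ≠ c ∧ ∀ i < d, v i ≠ v d ∧ v i ≠ c) :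
    S.image (update v d) ⊆ (hanoiGraph n k).neighborFinset v := by
  intro w hw
  obtain ⟨c, hc, rfl⟩ := mem_image.1 hw
  exact (SimpleGraph.mem_neighborFinset _ _ _).2 (adj_update (hS c hc).1 (hS c hc).2)

theorem two_mul_sub_three_le_degree {v : Fin n → Fin k} {i j : Fin n} (hij : v i ≠ v j) :
    2 * k - 3 ≤ (hanoiGraph n k).degree v := by
  have : NeZero n := ⟨i.pos.ne'⟩
  obtain ⟨d, hd, hbelow⟩ : ∃ d, v d ≠ v 0 ∧ ∀ i < d, v i = v 0 := by
    refine exists_forall_lt_eq_of_exists_ne ?_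
    by_contra! h
    exact hij ((h i).trans (h j).symm)
  have hd0 : d ≠ 0 := fun h => hd (h ▸ rfl)
  set A := (univ.erase (v 0)).image (update v 0)
  set B := ((univ.erase (v 0)).erase (v d)).image (update v d)
  have hA : A ⊆ (hanoiGraph n k).neighborFinset v :=
    image_update_subset_neighborFinset fun c hc =>
      ⟨(ne_of_mem_erase hc).symm, fun i hi => absurd hi (Fin.not_lt_zero i)⟩
  have hB : B ⊆ (hanoiGraph n k).neighborFinset v :=
    image_update_subset_neighborFinset fun c hc => by
      rw [mem_erase, mem_erase] at hc
      obtain ⟨hcd, hc0, -⟩ := hc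
      exact ⟨hcd.symm, fun i hi => hbelow i hi ▸ ⟨hd.symm, hc0.symm⟩⟩
  have hAB : Disjoint A B := by
    refine disjoint_left.2 fun w hwA hwB => ?_
    obtain ⟨a, -, rfl⟩ := mem_image.1 hwA
    obtain ⟨b, hb, hba⟩ := mem_image.1 hwB
    have hbd := congrFun hba d
    rw [update_self, update_of_ne hd0] at hbd
    exact ne_of_mem_erase hb hbd
  calc 2 * k - 3 = #A + #B := by
        rw [card_image_of_injective _ (update_injective v 0),
          card_image_of_injective _ (update_injective v d),
          card_erase_of_mem (mem_erase.2 ⟨hd, mem_univ _⟩), card_erase_of_mem (mem_univ _),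
          card_univ, Fintype.card_fin]
        omega
    _ = #(A ∪ B) := (card_union_of_disjoint hAB).symm
    _ ≤ #((hanoiGraph n k).neighborFinset v) := card_le_card (union_subset hA hB)
    _ = (hanoiGraph n k).degree v := SimpleGraph.card_neighborFinset_eq_degree _ _

end hanoiGraph

theorem hanoi_degree_non_perfect_state_general (n k : ℕ) (hk : 3 ≤ k)
    (v : Fin n → Fin k) (hv : ∀ c : Fin k, v ≠ fun _ => c) :
    2 * k - 3 ≤ (hanoiGraph n k).degree v ∧ k - 1 < (hanoiGraph n k).degree v := by
  obtain ⟨i, -⟩ := ne_iff.1 (hv ⟨0, by omega⟩)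
  obtain ⟨j, hj⟩ := ne_iff.1 (hv (v i))
  have hdeg := hanoiGraph.two_mul_sub_three_le_degree hj
  exact ⟨hdeg, by omega⟩

/-- In the Tower of Hanoi graph `H_n^k` (k ≥ 3, n ≥ 1), every vertex that is not
a perfect state (not a constant function) has degree at least `2k - 3`; in
particular its degree is strictly greater than `k - 1`. -/
theorem hanoi_degree_non_perfect_state (n k : ℕ) (hk : 3 ≤ k) (hn : 1 ≤ n)
    (v : Fin n → Fin k) (hv : ∀ c : Fin k, v ≠ fun _ => c) :
    2 * k - 3 ≤ (hanoiGraph n k).degree v ∧ k - 1 < (hanoiGraph n k).degree v :=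
  hanoi_degree_non_perfect_state_general n k hk v hv
end

section
/- For every k ≥ 3 and every n ≥ 1, if a vertex v of the Tower of Hanoi graph H_n^k lies in the substructure [i] (the largest disk of v lies on peg i), then the graph distance from v to the perfect state \overline{i} is strictly smaller than the graph distance from v to the perfect state \overline{j}, for every peg j ≠ i. -/
open SimpleGraph

namespace hanoiGraph

variable {n k : ℕ}

def snocHom (p : Fin k) : hanoiGraph n k →g hanoiGraph (n + 1) k where
  toFun v := Fin.snoc v p
  map_rel' := by
    rintro v w ⟨d, hmove, hfix, hfree⟩
    refine ⟨d.castSucc, by simpa using hmove, fun m hm => ?_, fun m hm => ?_⟩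
    · induction m using Fin.lastCases with
      | last => simp
      | cast m => simpa using hfix m (by rintro rfl; exact hm rfl)
    · induction m using Fin.lastCases with
      | last => exact absurd hm (Fin.castSucc_lt_last d).not_gt
      | cast m => simpa using hfree m (by simpa using hm)

def pegPermHom (σ : Equiv.Perm (Fin k)) : hanoiGraph n k →g hanoiGraph n k where
  toFun v := σ ∘ v
  map_rel' := by
    rintro v w ⟨d, hmove, hfix, hfree⟩
    exact ⟨d, σ.injective.ne hmove, fun m hm => congrArg σ (hfix m hm),
      fun m hm => ⟨σ.injective.ne (hfree m hm).1, σ.injective.ne (hfree m hm).2⟩⟩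

theorem adj_snoc_const_snoc_const {a b c : Fin k} (hab : a ≠ b) (hca : c ≠ a) (hcb : c ≠ b) :
    (hanoiGraph (n + 1) k).Adj (Fin.snoc (fun _ => c) a) (Fin.snoc (fun _ => c) b) := by
  refine ⟨Fin.last n, by simpa using hab, fun m hm => ?_, fun m hm => ?_⟩
  · induction m using Fin.lastCases with
    | last => exact absurd rfl hm
    | cast m => simp
  · induction m using Fin.lastCases with
    | last => exact absurd hm (lt_irrefl _)
    | cast m => simpa using ⟨hca, hcb⟩

theorem preconnected (hk : 3 ≤ k) : (hanoiGraph n k).Preconnected := by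
  induction n with
  | zero => intro v w; rw [Subsingleton.elim v w]
  | succ n ih =>
    intro v w
    induction v using Fin.snocCases with | _ x a => ?_
    induction w using Fin.snocCases with | _ y b => ?_
    by_cases hab : a = b
    · subst hab
      exact (ih x y).map (snocHom a)
    obtain ⟨c, hca, hcb⟩ := Fin.exists_ne_and_ne_of_two_lt a b hk
    exact (((ih x fun _ => c).map (snocHom a)).trans
      (adj_snoc_const_snoc_const hab hca hcb).reachable).trans
      ((ih (fun _ => c) y).map (snocHom b))

theorem swap_comp_eq_of_adj_of_last_ne {v u : Fin (n + 1) → Fin k}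
    (h : (hanoiGraph (n + 1) k).Adj v u) (hlast : v (Fin.last n) ≠ u (Fin.last n)) :
    Equiv.swap (v (Fin.last n)) (u (Fin.last n)) ∘ u = v := by
  obtain ⟨d, -, hfix, hfree⟩ := h
  obtain rfl : d = Fin.last n := by
    by_contra hd
    exact hlast (hfix _ (Ne.symm hd))
  funext m
  induction m using Fin.lastCases with
  | last => simp
  | cast m =>
    have hm := Fin.castSucc_lt_last m
    rw [Function.comp_apply, ← hfix _ hm.ne,
      Equiv.swap_apply_of_ne_of_ne (hfree _ hm).1 (hfree _ hm).2]

theorem exists_shorter_walk_to_own_perfect {i j : Fin k} (hj : j ≠ i)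
    {v : Fin (n + 1) → Fin k} (hv : v (Fin.last n) = i)
    (W : (hanoiGraph (n + 1) k).Walk v fun _ => j) :
    ∃ W' : (hanoiGraph (n + 1) k).Walk v (fun _ => i), W'.length < W.length := by
  induction hL : W.length using Nat.strong_induction_on generalizing v with
  | _ L ih =>
  cases W with
  | nil => exact absurd hv hj
  | @cons _ u _ hvu W =>
    rw [Walk.length_cons] at hL
    by_cases hu : u (Fin.last n) = i
    · obtain ⟨W', hW'⟩ := ih W.length (by omega) hu W rfl
      exact ⟨Walk.cons hvu W', by rw [Walk.length_cons]; omega⟩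
    set σ := Equiv.swap i (u (Fin.last n))
    have hσu : σ ∘ u = v := by
      simpa only [hv] using swap_comp_eq_of_adj_of_last_ne hvu fun h => hu (h.symm.trans hv)
    let M : (hanoiGraph (n + 1) k).Walk v fun _ => σ j := (W.map (pegPermHom σ)).copy hσu rfl
    have hM : M.length = W.length := (Walk.length_copy _ _ _).trans (Walk.length_map _ _)
    by_cases hp : u (Fin.last n) = j
    · exact ⟨M.copy rfl (by simp [σ, hp]), by rw [Walk.length_copy, hM]; omega⟩
    · have hσj : σ j = j := Equiv.swap_apply_of_ne_of_ne hj (Ne.symm hp)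
      obtain ⟨W', hW'⟩ :=
        ih W.length (by omega) hv (M.copy rfl (by rw [hσj])) (by rw [Walk.length_copy, hM])
      exact ⟨W', by omega⟩

end hanoiGraph

/-- If a vertex `v` of `H_n^k` lies in the substructure `[i]` (its largest disk
lies on peg `i`), then `v` is strictly closer to the perfect state `\overline{i}`
than to any other perfect state `\overline{j}`. -/
theorem hanoi_dist_to_own_perfect_state_lt (n k : ℕ) (hk : 3 ≤ k) (hn : 1 ≤ n)
    (i : Fin k) (v : Fin n → Fin k) (hv : v ⟨n - 1, by omega⟩ = i)
    (j : Fin k) (hj : j ≠ i) :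
    (hanoiGraph n k).dist v (fun _ => i) < (hanoiGraph n k).dist v (fun _ => j) := by
  obtain ⟨m, rfl⟩ : ∃ m, n = m + 1 := ⟨n - 1, by omega⟩
  obtain ⟨W, hW⟩ := (hanoiGraph.preconnected hk v fun _ => j).exists_walk_length_eq_dist
  obtain ⟨W', hW'⟩ := hanoiGraph.exists_shorter_walk_to_own_perfect hj hv W
  calc (hanoiGraph (m + 1) k).dist v (fun _ => i) ≤ W'.length := dist_le W'
    _ < W.length := hW'
    _ = (hanoiGraph (m + 1) k).dist v (fun _ => j) := hW
end

section
/- Let k ≥ 3, n ≥ 2, and let i ≠ j be pegs. Consider the vertex u of the Tower of Hanoi graph H_n^k with u(n−1) = i and u(d) = j for all d < n−1 (the largest disk on peg i, all other disks stacked on peg j). Then u is not adjacent to any vertex of the substructure [j], while for every peg l ≠ j the vertex u is adjacent to some vertex of the substructure [l]. -/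
variable {n k : ℕ}

lemma hanoiGraph_adj_update_iff (v : Fin n → Fin k) (d : Fin n) (p : Fin k) :
    (hanoiGraph n k).Adj v (Function.update v d p) ↔
      v d ≠ p ∧ ∀ i < d, v i ≠ v d ∧ v i ≠ p := by
  constructor
  · rintro ⟨e, hmoved, -, hfree⟩
    obtain rfl : e = d := by
      by_contra hed
      exact hmoved (Function.update_of_ne hed p v).symm
    simpa using And.intro hmoved hfree
  · rintro ⟨hmoved, hfree⟩
    refine ⟨d, by simpa using hmoved, fun i hi => (Function.update_of_ne hi p v).symm, ?_⟩
    simpa using hfree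

lemma hanoiGraph_adj_apply_ne_of_lt {v w : Fin n → Fin k} (h : (hanoiGraph n k).Adj v w)
    {d i : Fin n} (hd : v d ≠ w d) (hid : i < d) : w d ≠ v i := by
  obtain ⟨e, -, hstay, hfree⟩ := h
  obtain rfl : d = e := by
    by_contra hde
    exact hd (hstay d hde)
  exact fun hw => (hfree i hid).2 hw.symm

/-- Let `u` be the vertex of `H_n^k` (n ≥ 2) whose largest disk lies on peg `i`
and all other disks are stacked on peg `j ≠ i`. Then `u` is not adjacent to any
vertex of the substructure `[j]`, while for every peg `l ≠ j` it is adjacent to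
some vertex of `[l]`. -/
theorem hanoi_adjacency_of_special_vertex (n k : ℕ) (hk : 3 ≤ k) (hn : 2 ≤ n)
    (i j : Fin k) (hij : i ≠ j)
    (u : Fin n → Fin k) (hu1 : u ⟨n - 1, by omega⟩ = i)
    (hu2 : ∀ d : Fin n, (d : ℕ) < n - 1 → u d = j) :
    (∀ w : Fin n → Fin k, (hanoiGraph n k).Adj u w → w ⟨n - 1, by omega⟩ ≠ j) ∧
    (∀ l : Fin k, l ≠ j →
      ∃ w : Fin n → Fin k, (hanoiGraph n k).Adj u w ∧ w ⟨n - 1, by omega⟩ = l) := by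
  set largest : Fin n := ⟨n - 1, by omega⟩
  set smallest : Fin n := ⟨0, by omega⟩
  have hlt : smallest < largest := Fin.lt_def.mpr (by simp [smallest, largest]; omega)
  have hsmallest : u smallest = j := hu2 smallest hlt
  refine ⟨fun w hadj hwj => ?_, fun l hlj => ?_⟩
  · by_cases hstay : u largest = w largest
    · exact hij (hu1.symm.trans (hstay.trans hwj))
    · exact hanoiGraph_adj_apply_ne_of_lt hadj hstay hlt (hwj.trans hsmallest.symm)
  by_cases hli : l = i
  · obtain ⟨m, -, hmj⟩ := Fin.exists_ne_and_ne_of_two_lt i j hk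
    refine ⟨Function.update u smallest m, ?_, ?_⟩
    · exact (hanoiGraph_adj_update_iff u smallest m).mpr
        ⟨hsmallest ▸ hmj.symm, fun x hx => absurd (Fin.lt_def.mp hx) (Nat.not_lt_zero _)⟩
    · rw [Function.update_of_ne hlt.ne', hu1, hli]
  · refine ⟨Function.update u largest l, ?_, Function.update_self _ _ _⟩
    refine (hanoiGraph_adj_update_iff u largest l).mpr ⟨hu1 ▸ Ne.symm hli, fun x hx => ?_⟩
    rw [hu2 x (Fin.lt_def.mp hx), hu1]
    exact ⟨hij.symm, hlj.symm⟩
end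

section
/- Let k ≥ 3 and n ≥ 1. If a graph automorphism g of the Tower of Hanoi graph H_n^k fixes every perfect state, i.e., g(\overline{i}) = \overline{i} for all pegs i ∈ {0, …, k−1}, then g is the identity automorphism. -/
theorem SimpleGraph.IsNClique.map_iso {V W : Type*} {G : SimpleGraph V} {H : SimpleGraph W}
    {m : ℕ} {s : Finset V} (h : G.IsNClique m s) (e : G ≃g H) :
    H.IsNClique m (s.map e.toEmbedding.toEmbedding) :=
  h.map.mono ((SimpleGraph.map_le_iff_le_comap _ _ _).2 fun _ _ => e.map_adj_iff.2)

namespace hanoiGraph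

open Finset

variable {n k : ℕ}

theorem cons_adj_cons_iff {p q : Fin k} {u u' : Fin n → Fin k} :
    (hanoiGraph (n + 1) k).Adj (Fin.cons p u) (Fin.cons q u') ↔
      p ≠ q ∧ u = u' ∨
      p = q ∧ ∃ d, u d ≠ u' d ∧ (∀ i, i ≠ d → u i = u' i) ∧
        (∀ i, i < d → u i ≠ u d ∧ u i ≠ u' d) ∧ p ≠ u d ∧ p ≠ u' d := by
  simp only [hanoiGraph, Fin.exists_fin_succ, Fin.forall_fin_succ, Fin.cons_zero, Fin.cons_succ,
    ne_eq, Fin.succ_ne_zero, Fin.succ_inj, Fin.succ_lt_succ_iff, Fin.not_lt_zero, Fin.succ_pos,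
    funext_iff]
  grind

theorem disk_eq_of_triangle {v w x : Fin n → Fin k} {d e : Fin n}
    (hd : v d ≠ w d) (hoffd : ∀ i, i ≠ d → v i = w i)
    (he : v e ≠ x e) (hoffe : ∀ i, i ≠ e → v i = x i) (hwx : (hanoiGraph n k).Adj w x) :
    d = e := by
  obtain ⟨f, hf, hofff, -⟩ := hwx
  grind

theorem isNClique_fiber (u : Fin n → Fin k) :
    (hanoiGraph (n + 1) k).IsNClique k
      (univ.map ⟨(Fin.cons · u), Fin.cons_left_injective (α := fun _ => Fin k) u⟩) := by
  refine ⟨?_, by simp⟩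
  rintro _ hv _ hw hvw
  simp only [coe_map, coe_univ, Set.image_univ, Set.mem_range, Function.Embedding.coeFn_mk] at hv hw
  obtain ⟨p, rfl⟩ := hv
  obtain ⟨q, rfl⟩ := hw
  exact cons_adj_cons_iff.2 (Or.inl ⟨fun h => hvw (h ▸ rfl), rfl⟩)

theorem tail_eq_of_isNClique {s : Finset (Fin (n + 1) → Fin k)}
    (hs : (hanoiGraph (n + 1) k).IsNClique k s) {v w : Fin (n + 1) → Fin k} (hv : v ∈ s)
    (hw : w ∈ s) : Fin.tail v = Fin.tail w := by
  by_contra hne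
  obtain ⟨d, hd, hoff, hsmall⟩ := hs.isClique hv hw (by rintro rfl; exact hne rfl)
  have hd0 : 0 < d := Fin.pos_iff_ne_zero.2 <| by
    rintro rfl; exact hne (funext fun i => hoff i.succ (Fin.succ_ne_zero i))
  have hmove : ∀ x ∈ s, x ≠ v → (∀ i, i ≠ d → x i = v i) ∧ x d ≠ v 0 := by
    intro x hx hxv
    obtain ⟨e, he, hoffe, hsmalle⟩ := hs.isClique hv hx hxv.symm
    obtain rfl : d = e := by
      rcases eq_or_ne x w with rfl | hxw
      · by_contra hde; exact hd (hoffe d hde)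
      · exact disk_eq_of_triangle hd hoff he hoffe (hs.isClique hw hx hxw.symm)
    exact ⟨fun i hi => (hoffe i hi).symm, (hsmalle 0 hd0).2.symm⟩
  have hagree : ∀ x ∈ s, ∀ i, i ≠ d → x i = v i := fun x hx => by
    rcases eq_or_ne x v with rfl | hxv
    · exact fun _ _ => rfl
    · exact (hmove x hx hxv).1
  have hmaps : Set.MapsTo (fun x : Fin (n + 1) → Fin k => x d) s
      (univ.erase (v 0) : Finset (Fin k)) := fun x hx => by
    rcases eq_or_ne x v with rfl | hxv
    · simpa using (hsmall 0 hd0).1.symm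
    · simpa using (hmove x hx hxv).2
  have hinj : Set.InjOn (fun x : Fin (n + 1) → Fin k => x d) s := fun x hx y hy hxy =>
    funext fun i => by
      rcases eq_or_ne i d with rfl | hid
      · exact hxy
      · rw [hagree x hx i hid, hagree y hy i hid]
  have hcard := card_le_card_of_injOn _ hmaps hinj
  rw [hs.card_eq, card_erase_of_mem (mem_univ _), card_univ, Fintype.card_fin] at hcard
  have := (v 0).pos
  omega

theorem tail_eq_tail_iff_exists_isNClique {v w : Fin (n + 1) → Fin k} :
    Fin.tail v = Fin.tail w ↔ ∃ s, (hanoiGraph (n + 1) k).IsNClique k s ∧ v ∈ s ∧ w ∈ s := by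
  refine ⟨fun h => ⟨_, isNClique_fiber (Fin.tail v), ?_, ?_⟩,
    fun ⟨s, hs, hv, hw⟩ => tail_eq_of_isNClique hs hv hw⟩
  · exact mem_map.2 ⟨v 0, mem_univ _, Fin.cons_self_tail v⟩
  · exact mem_map.2 ⟨w 0, mem_univ _, h ▸ Fin.cons_self_tail w⟩

theorem tail_apply_eq_of_tail_eq (g : hanoiGraph (n + 1) k ≃g hanoiGraph (n + 1) k)
    {v w : Fin (n + 1) → Fin k} (h : Fin.tail v = Fin.tail w) :
    Fin.tail (g v) = Fin.tail (g w) := by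
  obtain ⟨s, hs, hv, hw⟩ := tail_eq_tail_iff_exists_isNClique.1 h
  exact tail_eq_tail_iff_exists_isNClique.2
    ⟨_, hs.map_iso g, mem_map_of_mem _ hv, mem_map_of_mem _ hw⟩

def tailEquiv (p : Fin k) (g : hanoiGraph (n + 1) k ≃g hanoiGraph (n + 1) k) :
    (Fin n → Fin k) ≃ (Fin n → Fin k) where
  toFun u := Fin.tail (g (Fin.cons p u))
  invFun u := Fin.tail (g.symm (Fin.cons p u))
  left_inv u := by
    simpa using tail_apply_eq_of_tail_eq g.symm (Fin.tail_cons p (Fin.tail (g (Fin.cons p u))))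
  right_inv u := by
    simpa using tail_apply_eq_of_tail_eq g (Fin.tail_cons p (Fin.tail (g.symm (Fin.cons p u))))

theorem tailEquiv_tail (p : Fin k) (g : hanoiGraph (n + 1) k ≃g hanoiGraph (n + 1) k)
    (v : Fin (n + 1) → Fin k) : tailEquiv p g (Fin.tail v) = Fin.tail (g v) :=
  tail_apply_eq_of_tail_eq g (Fin.tail_cons p (Fin.tail v))

theorem tailEquiv_symm (p : Fin k) (g : hanoiGraph (n + 1) k ≃g hanoiGraph (n + 1) k) :
    (tailEquiv p g).symm = tailEquiv p g.symm :=
  rfl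

theorem adj_tailEquiv (hk : 3 ≤ k) (p : Fin k)
    (g : hanoiGraph (n + 1) k ≃g hanoiGraph (n + 1) k)
    {u u' : Fin n → Fin k} (h : (hanoiGraph n k).Adj u u') :
    (hanoiGraph n k).Adj (tailEquiv p g u) (tailEquiv p g u') := by
  obtain ⟨d, hd, hoff, hsmall⟩ := h
  obtain ⟨x, hxu, hxu'⟩ := Fin.exists_ne_and_ne_of_two_lt (u d) (u' d) (by omega)
  have hlift : (hanoiGraph (n + 1) k).Adj (Fin.cons x u) (Fin.cons x u') :=
    cons_adj_cons_iff.2 (Or.inr ⟨rfl, d, hd, hoff, hsmall, hxu, hxu'⟩)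
  have himage := g.map_adj_iff.2 hlift
  rw [← Fin.cons_self_tail (g (Fin.cons x u)), ← Fin.cons_self_tail (g (Fin.cons x u')),
    ← tailEquiv_tail p, ← tailEquiv_tail p, Fin.tail_cons, Fin.tail_cons] at himage
  obtain ⟨-, heq⟩ | ⟨-, e, he, hoffe, hsmalle, -⟩ := cons_adj_cons_iff.1 himage
  · exact absurd (congrFun ((tailEquiv p g).injective heq) d) hd
  · exact ⟨e, he, hoffe, hsmalle⟩

def tailAut (hk : 3 ≤ k) (p : Fin k) (g : hanoiGraph (n + 1) k ≃g hanoiGraph (n + 1) k) :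
    hanoiGraph n k ≃g hanoiGraph n k where
  toEquiv := tailEquiv p g
  map_rel_iff' {u u'} := ⟨fun h => by
    simpa [← tailEquiv_symm] using adj_tailEquiv hk p g.symm h, adj_tailEquiv hk p g⟩

theorem tailAut_apply (hk : 3 ≤ k) (p : Fin k)
    (g : hanoiGraph (n + 1) k ≃g hanoiGraph (n + 1) k) (u : Fin n → Fin k) :
    tailAut hk p g u = tailEquiv p g u :=
  rfl

theorem apply_cons_eq_cons (g : hanoiGraph (n + 1) k ≃g hanoiGraph (n + 1) k)
    (hg : ∀ v, Fin.tail (g v) = Fin.tail v) (x : Fin k) (u : Fin n → Fin k) :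
    g (Fin.cons x u) = Fin.cons (g (Fin.cons x u) 0) u := by
  conv_lhs => rw [← Fin.cons_self_tail (g _), hg, Fin.tail_cons]

theorem apply_cons_zero_ne_and_ne (g : hanoiGraph (n + 2) k ≃g hanoiGraph (n + 2) k)
    (hg : ∀ v, Fin.tail (g v) = Fin.tail v) {u : Fin (n + 1) → Fin k} {x b : Fin k}
    (hb : b ≠ u 0) (hx : x ≠ u 0) (hxb : x ≠ b) :
    g (Fin.cons x u) 0 ≠ u 0 ∧ g (Fin.cons x u) 0 ≠ b := by
  have hmove : (hanoiGraph (n + 2) k).Adj (Fin.cons x u) (Fin.cons x (Function.update u 0 b)) :=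
    cons_adj_cons_iff.2 (Or.inr ⟨rfl, 0, by simpa using hb.symm, fun i hi => by simp [hi],
      fun i hi => absurd hi (Fin.not_lt_zero i), by simpa using hx, by simpa using hxb⟩)
  have himage := g.map_adj_iff.2 hmove
  rw [apply_cons_eq_cons g hg x u, apply_cons_eq_cons g hg x (Function.update u 0 b)] at himage
  obtain ⟨-, hu⟩ | ⟨-, d, hd, -, -, hd1, hd2⟩ := cons_adj_cons_iff.1 himage
  · exact absurd (by simpa using congrFun hu 0) hb.symm
  · obtain rfl : d = 0 := by by_contra h; exact hd (by simp [h])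
    simpa using And.intro hd1 hd2

theorem eq_refl_of_tail_apply_eq_tail (hk : 3 ≤ k)
    (g : hanoiGraph (n + 2) k ≃g hanoiGraph (n + 2) k)
    (hg : ∀ v, Fin.tail (g v) = Fin.tail v) : g = RelIso.refl _ := by
  refine RelIso.ext fun v => ?_
  set u := Fin.tail v
  set σ : Fin k → Fin k := fun x => g (Fin.cons x u) 0
  have hcons : ∀ x, g (Fin.cons x u) = Fin.cons (σ x) u := fun x => apply_cons_eq_cons g hg x u
  have hfix : ∀ x, x ≠ u 0 → σ x = x := by
    intro x hx
    by_contra hσx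
    obtain ⟨b, hb, hbx⟩ := Fin.exists_ne_and_ne_of_two_lt (u 0) x (by omega)
    have hσx_ne := (apply_cons_zero_ne_and_ne g hg hb hx hbx.symm).1
    exact (apply_cons_zero_ne_and_ne g hg hσx_ne hx (Ne.symm hσx)).2 rfl
  have hσ_inj : Function.Injective σ := fun x y h => by
    have hxy : g (Fin.cons x u) = g (Fin.cons y u) := by rw [hcons, hcons, h]
    simpa using congrFun (g.injective hxy) 0
  have hσ : ∀ x, σ x = x := fun x => by
    rcases eq_or_ne x (u 0) with rfl | hx
    · by_contra h
      exact h (hσ_inj (hfix _ h))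
    · exact hfix x hx
  calc g v = g (Fin.cons (v 0) u) := by rw [Fin.cons_self_tail]
    _ = v := by rw [hcons, hσ, Fin.cons_self_tail]

end hanoiGraph

theorem hanoi_aut_fixing_perfect_states_is_id_general (n k : ℕ) (hk : 3 ≤ k)
    (g : hanoiGraph n k ≃g hanoiGraph n k)
    (hg : ∀ i : Fin k, g (fun _ => i) = fun _ => i) :
    g = RelIso.refl _ := by
  induction n with
  | zero => exact RelIso.ext fun v => Subsingleton.elim _ _
  | succ n ih =>
    let p : Fin k := ⟨0, by omega⟩
    have htail : ∀ v, Fin.tail (g v) = Fin.tail v := by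
      have hid := ih (hanoiGraph.tailAut hk p g) fun i =>
        (hanoiGraph.tailEquiv_tail p g fun _ => i).trans (by rw [hg]; rfl)
      intro v
      rw [← hanoiGraph.tailEquiv_tail p, ← hanoiGraph.tailAut_apply hk, hid]
      rfl
    rcases n with _ | n
    · refine RelIso.ext fun v => ?_
      rw [show v = fun _ => v 0 from funext fun i => congrArg v (Fin.fin_one_eq_zero i)]
      exact hg _
    · exact hanoiGraph.eq_refl_of_tail_apply_eq_tail hk g htail

/-- If an automorphism of the Tower of Hanoi graph `H_n^k` (k ≥ 3, n ≥ 1) fixes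
every perfect state, then it is the identity automorphism. -/
theorem hanoi_aut_fixing_perfect_states_is_id (n k : ℕ) (hk : 3 ≤ k) (hn : 1 ≤ n)
    (g : hanoiGraph n k ≃g hanoiGraph n k)
    (hg : ∀ i : Fin k, g (fun _ => i) = fun _ => i) :
    g = RelIso.refl _ :=
  hanoi_aut_fixing_perfect_states_is_id_general n k hk g hg
end

section
/- For every k ≥ 3 and every n ≥ 1, the automorphism group of the Tower of Hanoi graph H_n^k is isomorphic to the symmetric group S_k on the k pegs; explicitly, the map sending a permutation σ of the pegs to the automorphism v ↦ σ ∘ v is a group isomorphism from S_k onto the automorphism group of H_n^k. -/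
/-- The automorphism group of the Tower of Hanoi graph, under composition. -/
instance hanoiAutGroup (n k : ℕ) : Group (hanoiGraph n k ≃g hanoiGraph n k) where
  mul a b := b.trans a
  one := RelIso.refl _
  inv a := a.symm
  mul_assoc a b c := rfl
  one_mul a := RelIso.ext fun _ => rfl
  mul_one a := RelIso.ext fun _ => rfl
  inv_mul_cancel a := RelIso.ext fun x => a.symm_apply_apply x

open Equiv Function SimpleGraph

namespace hanoiGraph

variable {n m k : ℕ}

theorem adj_iff_of_ne {v w : Fin n → Fin k} {d : Fin n} (hd : v d ≠ w d) :
    (hanoiGraph n k).Adj v w ↔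
      (∀ i, i ≠ d → v i = w i) ∧ ∀ i, i < d → v i ≠ v d ∧ v i ≠ w d := by
  refine ⟨fun ⟨e, _, hvw, hlt⟩ => ?_, fun h => ⟨d, hd, h⟩⟩
  obtain rfl : d = e := by_contra fun hde => hd (hvw d hde)
  exact ⟨hvw, hlt⟩

theorem eq_of_adj_of_ne_of_ne {v w : Fin n → Fin k} {d e : Fin n}
    (h : (hanoiGraph n k).Adj v w) (hd : v d ≠ w d) (he : v e ≠ w e) : d = e :=
  by_contra fun hde => he (((adj_iff_of_ne hd).1 h).1 e (Ne.symm hde))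

theorem apply_eq_of_triangle {x y z : Fin n → Fin k} {d i : Fin n}
    (hxy : (hanoiGraph n k).Adj x y) (hxz : (hanoiGraph n k).Adj x z)
    (hyz : (hanoiGraph n k).Adj y z) (hd : x d ≠ y d) (hi : i ≠ d) : x i = z i := by
  by_contra hxzi
  have hxyi : x i = y i := ((adj_iff_of_ne hd).1 hxy).1 i hi
  have hxzd : x d = z d := ((adj_iff_of_ne hxzi).1 hxz).1 d (Ne.symm hi)
  exact hi (eq_of_adj_of_ne_of_ne hyz (hxyi ▸ hxzi) (hxzd ▸ Ne.symm hd))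

theorem tail_eq_of_copy_top (c : Copy (⊤ : SimpleGraph (Fin k)) (hanoiGraph (m + 1) k))
    (p q : Fin k) : Fin.tail (c p) = Fin.tail (c q) := by
  by_contra htail
  obtain ⟨j, hj⟩ : ∃ j : Fin m, c p j.succ ≠ c q j.succ := Function.ne_iff.1 htail
  have hadj {r s : Fin k} (h : r ≠ s) : (hanoiGraph (m + 1) k).Adj (c r) (c s) :=
    c.toHom.map_adj h
  have hpq : p ≠ q := by rintro rfl; exact hj rfl
  have hagree (r : Fin k) (i : Fin (m + 1)) (hi : i ≠ j.succ) : c r i = c p i := by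
    rcases eq_or_ne r p with rfl | hrp
    · rfl
    rcases eq_or_ne r q with rfl | hrq
    · exact (((adj_iff_of_ne hj).1 (hadj hpq)).1 i hi).symm
    · exact (apply_eq_of_triangle (hadj hpq) (hadj hrp.symm) (hadj hrq.symm) hj hi).symm
  have hinj : Injective fun r => c r j.succ := by
    intro r s h
    apply c.injective
    simp only [Copy.coe_toHom]
    funext i
    rcases eq_or_ne i j.succ with rfl | hi
    · exact h
    · rw [hagree r i hi, hagree s i hi]
  -- the pegs of disk `j.succ` in the copy exhaust `Fin k`, so one of them holds disk `0`
  obtain ⟨r, hr⟩ := Finite.injective_iff_surjective.1 hinj (c p 0)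
  rcases eq_or_ne r p with rfl | hrp
  · exact (((adj_iff_of_ne hj).1 (hadj hpq)).2 0 j.succ_pos).1 hr.symm
  · have hrp' : c p j.succ ≠ c r j.succ := fun h => hrp (hinj h.symm)
    exact (((adj_iff_of_ne hrp').1 (hadj hrp.symm)).2 0 j.succ_pos).2 hr.symm

theorem adj_cons_of_ne (u : Fin m → Fin k) {p q : Fin k} (h : p ≠ q) :
    (hanoiGraph (m + 1) k).Adj (Fin.cons p u) (Fin.cons q u) := by
  refine (adj_iff_of_ne (d := 0) (by simpa using h)).2 ⟨fun i hi => ?_, fun i hi => ?_⟩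
  · obtain ⟨j, rfl⟩ := Fin.exists_succ_eq.2 hi
    simp
  · exact absurd hi (Fin.not_lt_zero i)

def tailFiber (u : Fin m → Fin k) : Copy (⊤ : SimpleGraph (Fin k)) (hanoiGraph (m + 1) k) where
  toHom := ⟨fun p => Fin.cons p u, adj_cons_of_ne u⟩
  injective' _ _ h := by simpa using congrFun h 0

theorem tail_apply_eq_tail_apply_of_tail_eq (f : hanoiGraph (m + 1) k ≃g hanoiGraph (m + 1) k)
    {v w : Fin (m + 1) → Fin k} (h : Fin.tail v = Fin.tail w) :
    Fin.tail (f v) = Fin.tail (f w) := by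
  have := tail_eq_of_copy_top (f.toEmbedding.toCopy.comp (tailFiber (Fin.tail v))) (v 0) (w 0)
  change Fin.tail (f (Fin.cons (v 0) (Fin.tail v))) = Fin.tail (f (Fin.cons (w 0) (Fin.tail v)))
    at this
  rwa [Fin.cons_self_tail, h, Fin.cons_self_tail] at this

theorem adj_tail {v w : Fin (m + 1) → Fin k} (h : (hanoiGraph (m + 1) k).Adj v w)
    (ht : Fin.tail v ≠ Fin.tail w) : (hanoiGraph m k).Adj (Fin.tail v) (Fin.tail w) := by
  obtain ⟨j, hj⟩ : ∃ j : Fin m, v j.succ ≠ w j.succ := Function.ne_iff.1 ht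
  obtain ⟨hagree, hlt⟩ := (adj_iff_of_ne hj).1 h
  exact (adj_iff_of_ne (v := Fin.tail v) (w := Fin.tail w) hj).2
    ⟨fun i hi => hagree i.succ ((Fin.succ_injective _).ne hi),
    fun i hi => hlt i.succ (Fin.succ_lt_succ_iff.2 hi)⟩

theorem exists_adj_cons_cons (hk : 3 ≤ k) {u u' : Fin m → Fin k}
    (h : (hanoiGraph m k).Adj u u') :
    ∃ p, (hanoiGraph (m + 1) k).Adj (Fin.cons p u) (Fin.cons p u') := by
  obtain ⟨d, hd, hagree, hlt⟩ := h
  obtain ⟨p, hp, hp'⟩ := Fin.exists_ne_and_ne_of_two_lt (u d) (u' d) (by omega)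
  refine ⟨p, (adj_iff_of_ne (d := d.succ) (by simpa using hd)).2
    ⟨fun i hi => ?_, fun i hi => ?_⟩⟩
  · cases i using Fin.cases with
    | zero => rfl
    | succ i => simpa using hagree i (by rintro rfl; exact hi rfl)
  · cases i using Fin.cases with
    | zero => simpa using ⟨hp, hp'⟩
    | succ i => simpa using hlt i (Fin.succ_lt_succ_iff.1 hi)

section tailIso

variable (f : hanoiGraph (m + 1) k ≃g hanoiGraph (m + 1) k) (p : Fin k)

def tailMap (u : Fin m → Fin k) : Fin m → Fin k := Fin.tail (f (Fin.cons p u))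

theorem tail_apply (v : Fin (m + 1) → Fin k) : Fin.tail (f v) = tailMap f p (Fin.tail v) :=
  tail_apply_eq_tail_apply_of_tail_eq f (by rw [Fin.tail_cons])

theorem tailMap_symm_tailMap (u : Fin m → Fin k) : tailMap f.symm p (tailMap f p u) = u := by
  change tailMap f.symm p (Fin.tail (f (Fin.cons p u))) = u
  rw [← tail_apply, RelIso.symm_apply_apply, Fin.tail_cons]

theorem adj_tailMap (hk : 3 ≤ k) {u u' : Fin m → Fin k} (h : (hanoiGraph m k).Adj u u') :
    (hanoiGraph m k).Adj (tailMap f p u) (tailMap f p u') := by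
  obtain ⟨q, hq⟩ := exists_adj_cons_cons hk h
  have hne : tailMap f p u ≠ tailMap f p u' := fun he =>
    h.ne (by simpa only [tailMap_symm_tailMap] using congrArg (tailMap f.symm p) he)
  have htail (w : Fin m → Fin k) : tailMap f p w = Fin.tail (f (Fin.cons q w)) := by
    rw [tail_apply f p, Fin.tail_cons]
  rw [htail, htail] at hne ⊢
  exact adj_tail (f.map_adj_iff.2 hq) hne

def tailIso (hk : 3 ≤ k) : hanoiGraph m k ≃g hanoiGraph m k where
  toFun := tailMap f p
  invFun := tailMap f.symm p
  left_inv := tailMap_symm_tailMap f p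
  right_inv := tailMap_symm_tailMap f.symm p
  map_rel_iff' {u u'} := ⟨fun h => by
    have h : (hanoiGraph m k).Adj (tailMap f p u) (tailMap f p u') := h
    simpa only [tailMap_symm_tailMap] using adj_tailMap f.symm p hk h, adj_tailMap f p hk⟩

end tailIso

theorem apply_zero_eq_of_tail_eq (hk : 3 ≤ k) (g : hanoiGraph (m + 2) k ≃g hanoiGraph (m + 2) k)
    (hg : ∀ v, Fin.tail (g v) = Fin.tail v) {v : Fin (m + 2) → Fin k} (hv : v 0 ≠ v 1) :
    g v 0 = v 0 := by
  have hg1 (w : Fin (m + 2) → Fin k) : g w 1 = w 1 := congrFun (hg w) 0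
  -- `g` turns the move of disk `1` from `v 1` to `t` into a move of disk `1` between those pegs
  have hmove (t : Fin k) (ht0 : t ≠ v 0) (ht1 : t ≠ v 1) : g v 0 ≠ v 1 ∧ g v 0 ≠ t := by
    have hvt : v 1 ≠ update v 1 t 1 := by simpa using ht1.symm
    have hadj : (hanoiGraph (m + 2) k).Adj v (update v 1 t) := by
      refine (adj_iff_of_ne hvt).2 ⟨fun i hi => (update_of_ne hi _ _).symm, fun i hi => ?_⟩
      obtain rfl := (Fin.lt_one_iff i).1 hi
      simpa using ⟨hv, ht0.symm⟩
    have hgvt : g v 1 ≠ g (update v 1 t) 1 := by rwa [hg1, hg1]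
    simpa [hg1] using ((adj_iff_of_ne hgvt).1 (g.map_adj_iff.2 hadj)).2 0 Fin.zero_lt_one
  by_contra h
  obtain ⟨t, ht0, ht1⟩ := Fin.exists_ne_and_ne_of_two_lt (v 0) (v 1) (by omega)
  exact (hmove (g v 0) h (hmove t ht0 ht1).1).2 rfl

theorem eq_one_of_tail_apply_eq (hk : 3 ≤ k) (g : hanoiGraph (m + 2) k ≃g hanoiGraph (m + 2) k)
    (hg : ∀ v, Fin.tail (g v) = Fin.tail v) : g = 1 := by
  have hext {w w' : Fin (m + 2) → Fin k} (h0 : w 0 = w' 0) (ht : Fin.tail w = Fin.tail w') :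
      w = w' := by
    rw [← Fin.cons_self_tail w, h0, ht, Fin.cons_self_tail]
  refine RelIso.ext fun v => show g v = v from ?_
  by_cases hv : v 0 = v 1
  · by_cases hgv : g v 0 = g v 1
    · exact hext (by rw [hgv, hv]; exact congrFun (hg v) 0) (hg v)
    · exact g.injective (hext (apply_zero_eq_of_tail_eq hk g hg hgv) (hg _))
  · exact hext (apply_zero_eq_of_tail_eq hk g hg hv) (hg v)

theorem adj_comp_iff (σ : Perm (Fin k)) {v w : Fin n → Fin k} :
    (hanoiGraph n k).Adj (σ ∘ v) (σ ∘ w) ↔ (hanoiGraph n k).Adj v w := by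
  simp [hanoiGraph]

def pegPerm : Perm (Fin k) →* (hanoiGraph n k ≃g hanoiGraph n k) where
  toFun σ := ⟨Equiv.piCongrRight fun _ => σ, adj_comp_iff σ⟩
  map_one' := rfl
  map_mul' _ _ := rfl

theorem pegPerm_apply (σ : Perm (Fin k)) (v : Fin n → Fin k) : pegPerm σ v = σ ∘ v := rfl

theorem pegPerm_injective : Injective (pegPerm : Perm (Fin k) →* (hanoiGraph (m + 1) k ≃g _)) :=
  fun _ _ h => Equiv.ext fun p => congrFun (DFunLike.congr_fun h fun _ => p) 0

theorem pegPerm_surjective (hk : 3 ≤ k) :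
    ∀ m, Surjective (pegPerm : Perm (Fin k) →* (hanoiGraph (m + 1) k ≃g _))
  | 0, f => ⟨(Equiv.funUnique (Fin 1) (Fin k)).permCongr f.toEquiv, RelIso.ext fun v => by
      funext i
      obtain rfl := Fin.fin_one_eq_zero i
      change funUnique (Fin 1) (Fin k) (f ((funUnique (Fin 1) (Fin k)).symm (v 0))) = f v 0
      rw [show v 0 = funUnique (Fin 1) (Fin k) v from rfl, Equiv.symm_apply_apply]
      rfl⟩
  | m + 1, f => by
    let p : Fin k := ⟨0, by omega⟩
    obtain ⟨σ, hσ⟩ := pegPerm_surjective hk m (tailIso f p hk)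
    refine ⟨σ, inv_mul_eq_one.1 (eq_one_of_tail_apply_eq hk _ fun v => ?_)⟩
    calc Fin.tail (⇑σ⁻¹ ∘ f v) = ⇑σ⁻¹ ∘ tailIso f p hk (Fin.tail v) := by
          rw [← Fin.comp_tail, tail_apply f p]; rfl
      _ = Fin.tail v := by simp [← hσ, pegPerm_apply, ← Function.comp_assoc]

end hanoiGraph

/-- Main theorem: for every k ≥ 3 and n ≥ 1, the automorphism group of `H_n^k`
is isomorphic to the symmetric group `S_k`, via the map sending a peg
permutation `σ` to the automorphism `v ↦ σ ∘ v`. -/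
theorem hanoi_aut_group_iso_symmetric_group (n k : ℕ) (hk : 3 ≤ k) (hn : 1 ≤ n) :
    ∃ e : Equiv.Perm (Fin k) ≃* (hanoiGraph n k ≃g hanoiGraph n k),
      ∀ (σ : Equiv.Perm (Fin k)) (v : Fin n → Fin k), e σ v = σ ∘ v := by
  obtain ⟨m, rfl⟩ : ∃ m, n = m + 1 := ⟨n - 1, by omega⟩
  exact ⟨MulEquiv.ofBijective hanoiGraph.pegPerm
    ⟨hanoiGraph.pegPerm_injective, hanoiGraph.pegPerm_surjective hk m⟩, fun _ _ => rfl⟩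
end
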